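/- arXiv:1804.08941 — 8 statements merged into one kernel-verified Lean document; each statement's English description precedes it below -/
import Mathlib

section
/- Let s, q ∈ ℂ[X] be coprime polynomials with q ≠ 0 and such that s and q are not both constant. For λ ∈ ℂ let N(λ) denote the number of roots of the polynomial λ·q − s lying in the open unit disc 𝔻 = {z ∈ ℂ : |z| < 1}, counted with multiplicity. Then the set U = {λ ∈ ℂ : λ·q(z) ≠ s(z) for every z ∈ ℂ with |z| = 1} is open in ℂ, for every λ ∈ U the polynomial λ·q − s is nonzero, and the function λ ↦ N(λ) is locally constant on U. -/
/-!
By the argument principle, `2πi · N(λ)` is the integral over the unit circle of the logarithmic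
derivative `(λ q' - s') / (λ q - s)`. On `U` the denominator does not vanish on the (compact)
circle, so `U` is open and the integral depends continuously on `λ ∈ U`; being `2πi` times a
natural number, it is then locally constant.
-/

open Polynomial Filter Metric Complex Real Topology

section CircleIntegral

variable {E : Type*} [NormedAddCommGroup E] {c : ℂ} {R : ℝ}

open scoped Classical in
theorem circleIntegral_sub_inv_eq_ite {w : ℂ} (hR : 0 ≤ R) (hw : w ∉ sphere c R) :
    (∮ z in C(c, R), (z - w)⁻¹) = if w ∈ ball c R then 2 * π * I else 0 := by
  split_ifs with hball
  · exact circleIntegral.integral_sub_inv_of_mem_ball hball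
  · have hw' : w ∉ closedBall c R := by
      rw [← ball_union_sphere]; exact fun h => h.elim hball hw
    refine DiffContOnCl.circleIntegral_eq_zero hR
      (DifferentiableOn.diffContOnCl_ball (U := {w}ᶜ) ?_ fun z hz => ?_)
    · exact ((differentiable_id.sub_const w).differentiableOn).inv
        fun z hz => sub_ne_zero.2 hz
    · rintro rfl; exact hw' hz

theorem CircleIntegrable.multiset_sum {ι : Type*} {t : Multiset ι} {f : ι → ℂ → E}
    (h : ∀ i ∈ t, CircleIntegrable (f i) c R) :
    CircleIntegrable (fun z => (t.map fun i => f i z).sum) c R := by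
  induction t using Multiset.induction_on with
  | empty => simp
  | cons i t ih =>
    rw [Multiset.forall_mem_cons] at h
    simp only [Multiset.map_cons, Multiset.sum_cons]
    exact h.1.add (ih h.2)

variable [NormedSpace ℂ E]

theorem circleIntegral.integral_multiset_sum {ι : Type*} {t : Multiset ι} {f : ι → ℂ → E}
    (h : ∀ i ∈ t, CircleIntegrable (f i) c R) :
    (∮ z in C(c, R), (t.map fun i => f i z).sum) =
      (t.map fun i => ∮ z in C(c, R), f i z).sum := by
  induction t using Multiset.induction_on with
  | empty => simp [circleIntegral]
  | cons i t ih =>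
    rw [Multiset.forall_mem_cons] at h
    simp only [Multiset.map_cons, Multiset.sum_cons]
    rw [circleIntegral.integral_add h.1 (CircleIntegrable.multiset_sum h.2), ih h.2]

theorem continuousOn_circleIntegral {X : Type*} [TopologicalSpace X] {f : X → ℂ → E}
    {s : Set X} (hf : ContinuousOn (Function.uncurry f) (s ×ˢ sphere c |R|)) :
    ContinuousOn (fun x => ∮ z in C(c, R), f x z) s := by
  rw [continuousOn_iff_continuous_domRestrict]
  have hf' : Continuous fun p : s × ℝ => f p.1 (circleMap c R p.2) :=
    hf.comp_continuous ((continuous_subtype_val.comp continuous_fst).prodMk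
      ((continuous_circleMap c R).comp continuous_snd))
      fun p => ⟨p.1.2, circleMap_mem_sphere' c R p.2⟩
  refine intervalIntegral.continuous_parametric_intervalIntegral_of_continuous'
    (f := fun (x : s) θ => deriv (circleMap c R) θ • f x (circleMap c R θ)) ?_ 0 (2 * π)
  simp only [Function.uncurry_def, deriv_circleMap]
  exact (((continuous_circleMap 0 R).comp continuous_snd).mul continuous_const).smul hf'

end CircleIntegral

theorem Multiset.sum_map_ite_eq_card_filter_nsmul {α M : Type*} [AddCommMonoid M]
    (t : Multiset α) (P : α → Prop) [DecidablePred P] (a : M) :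
    (t.map fun x => if P x then a else 0).sum = Multiset.card (t.filter P) • a := by
  induction t using Multiset.induction_on with
  | empty => simp
  | cons x t ih => by_cases h : P x <;> simp [h, ih, add_nsmul, add_comm]

open scoped Classical in
theorem Polynomial.circleIntegral_eval_derivative_div_eval {p : ℂ[X]} {c : ℂ} {R : ℝ}
    (hR : 0 ≤ R) (hp : ∀ z ∈ sphere c R, p.eval z ≠ 0) :
    (∮ z in C(c, R), p.derivative.eval z / p.eval z) =
      2 * π * I * Multiset.card (p.roots.filter (· ∈ ball c R)) := by
  have hroots : ∀ r ∈ p.roots, r ∉ sphere c R :=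
    fun r hr hs => hp r hs (isRoot_of_mem_roots hr)
  calc (∮ z in C(c, R), p.derivative.eval z / p.eval z)
      = ∮ z in C(c, R), (p.roots.map fun r => (z - r)⁻¹).sum :=
        circleIntegral.integral_congr hR fun z hz => by
          simp [(IsAlgClosed.splits p).eval_derivative_div_eval_of_ne_zero (hp z hz)]
    _ = (p.roots.map fun r => if r ∈ ball c R then 2 * π * I else 0).sum := by
        rw [circleIntegral.integral_multiset_sum fun r hr => ?_]
        · exact congrArg _ (Multiset.map_congr rfl fun r hr =>
            circleIntegral_sub_inv_eq_ite hR (hroots r hr))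
        · rw [circleIntegrable_sub_inv_iff, abs_of_nonneg hR]
          exact Or.inr (hroots r hr)
    _ = _ := by
        rw [Multiset.sum_map_ite_eq_card_filter_nsmul, nsmul_eq_mul, mul_comm]

theorem eventually_eq_of_continuousAt_natCast {X : Type*} [TopologicalSpace X] {f : X → ℕ}
    {x : X} (hf : ContinuousAt (fun y => (f y : ℂ)) x) : ∀ᶠ y in 𝓝 x, f y = f x := by
  have hre : ContinuousAt (fun y => (f y : ℝ)) x := by
    simpa [Function.comp_def] using Complex.continuous_re.continuousAt.comp hf
  have hcont : ContinuousAt f x := Nat.isClosedEmbedding_coe_real.continuousAt_iff.2 hre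
  rwa [ContinuousAt, nhds_discrete ℕ, tendsto_pure] at hcont

section Pencil

variable (s q : ℂ[X]) {c : ℂ} {R : ℝ}

theorem isOpen_setOf_forall_mem_sphere_mul_eval_ne :
    IsOpen {μ : ℂ | ∀ z ∈ sphere c R, μ * q.eval z ≠ s.eval z} := by
  refine isOpen_iff_mem_nhds.2 fun μ hμ =>
    (isCompact_sphere c R).eventually_forall_of_forall_eventually fun z hz => ?_
  exact (isOpen_ne_fun (continuous_fst.mul (q.continuous.comp continuous_snd))
    (s.continuous.comp continuous_snd)).mem_nhds (hμ z hz)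

open scoped Classical in
theorem eventually_card_roots_filter_mem_ball_eq (hR : 0 ≤ R) {μ₀ : ℂ}
    (hμ₀ : ∀ z ∈ sphere c R, μ₀ * q.eval z ≠ s.eval z) :
    ∀ᶠ μ in 𝓝 μ₀, Multiset.card ((C μ * q - s).roots.filter (· ∈ ball c R)) =
      Multiset.card ((C μ₀ * q - s).roots.filter (· ∈ ball c R)) := by
  set U := {μ : ℂ | ∀ z ∈ sphere c R, μ * q.eval z ≠ s.eval z}
  have hU : U ∈ 𝓝 μ₀ := (isOpen_setOf_forall_mem_sphere_mul_eval_ne s q).mem_nhds hμ₀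
  have hne : ∀ μ ∈ U, ∀ z ∈ sphere c R, (C μ * q - s).eval z ≠ 0 :=
    fun μ hμ z hz => by simpa [sub_eq_zero] using hμ z hz
  have hcont : ContinuousOn
      (fun μ => ∮ z in C(c, R), (C μ * q - s).derivative.eval z / (C μ * q - s).eval z) U := by
    refine continuousOn_circleIntegral ?_
    rw [abs_of_nonneg hR]
    refine ContinuousOn.div (Continuous.continuousOn ?_) (Continuous.continuousOn ?_)
      fun p hp => hne p.1 hp.1 p.2 hp.2
    · simp only [derivative_sub, derivative_C_mul, eval_sub, eval_mul, eval_C]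
      fun_prop
    · simp only [eval_sub, eval_mul, eval_C]
      fun_prop
  refine eventually_eq_of_continuousAt_natCast <|
    ((hcont.continuousAt hU).const_mul (2 * π * I)⁻¹).congr <| eventually_of_mem hU fun μ hμ => ?_
  dsimp only
  rw [Polynomial.circleIntegral_eval_derivative_div_eval hR (hne μ hμ),
    inv_mul_cancel_left₀ (by simp [pi_ne_zero])]

end Pencil

open scoped Classical in
theorem stmt0_general (s q : Polynomial ℂ)
    (N : ℂ → ℕ)
    (hN : ∀ l : ℂ, N l =
      Multiset.card (((Polynomial.C l * q - s).roots).filter (fun z => ‖z‖ < 1)))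
    (U : Set ℂ)
    (hU : U = {l : ℂ | ∀ z : ℂ, ‖z‖ = 1 → l * q.eval z ≠ s.eval z}) :
    IsOpen U ∧ (∀ l ∈ U, Polynomial.C l * q - s ≠ 0) ∧
      (∀ l ∈ U, ∀ᶠ μ in nhds l, N μ = N l) := by
  have hU_sphere : U = {l : ℂ | ∀ z ∈ sphere (0 : ℂ) 1, l * q.eval z ≠ s.eval z} := by
    simp [hU]
  have hN_ball :
      ∀ l, N l = Multiset.card ((C l * q - s).roots.filter (· ∈ ball (0 : ℂ) 1)) :=
    fun l => by rw [hN, Multiset.filter_congr fun z _ => mem_ball_zero_iff.symm]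
  rw [hU_sphere]
  refine ⟨isOpen_setOf_forall_mem_sphere_mul_eval_ne s q, fun l hl h0 => ?_, fun l hl => ?_⟩
  · exact hl 1 (by simp) (by simpa [sub_eq_zero] using congrArg (eval 1) h0)
  · simpa only [hN_ball] using eventually_card_roots_filter_mem_ball_eq s q zero_le_one hl

open scoped Classical in
/-- For coprime `s, q ∈ ℂ[X]` with `q ≠ 0`, not both constant, the set `U` of `λ`
such that `λ·q − s` has no root on the unit circle is open, `λ·q − s ≠ 0` on `U`,
and the number of roots of `λ·q − s` in the open unit disc (with multiplicity)
is locally constant on `U`. -/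
theorem stmt0 (s q : Polynomial ℂ) (hco : IsCoprime s q) (hq : q ≠ 0)
    (hnc : ¬ (s.natDegree = 0 ∧ q.natDegree = 0))
    (N : ℂ → ℕ)
    (hN : ∀ l : ℂ, N l =
      Multiset.card (((Polynomial.C l * q - s).roots).filter (fun z => ‖z‖ < 1)))
    (U : Set ℂ)
    (hU : U = {l : ℂ | ∀ z : ℂ, ‖z‖ = 1 → l * q.eval z ≠ s.eval z}) :
    IsOpen U ∧ (∀ l ∈ U, Polynomial.C l * q - s ≠ 0) ∧
      (∀ l ∈ U, ∀ᶠ μ in nhds l, N μ = N l) :=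
  stmt0_general s q N hN U hU
end

section
/- Let α ∈ ℂ with α ≠ 1, and write a = Re α, b = Im α. Then {(z − α)/(z − 1) : z ∈ ℂ, |z| = 1, z ≠ 1} = {x + iy : x, y ∈ ℝ, 2by = (a² + b² − 1) + (2 − 2a)x}. -/
/-!
The relation `w (z - 1) = z - α` is symmetric in `z` and `w`, so `w = (z - α)/(z - 1)` exactly when
`z = (w - α)/(w - 1)`. Hence `|z| = 1` becomes `|w - α| = |w - 1|`: the image of the circle is the
perpendicular bisector of `α` and `1`, whose equation is the stated line.
-/

namespace Complex

theorem norm_sub_eq_norm_sub_one_iff (α w : ℂ) :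
    ‖w - α‖ = ‖w - 1‖ ↔
      2 * α.im * w.im = (α.re ^ 2 + α.im ^ 2 - 1) + (2 - 2 * α.re) * w.re := by
  rw [← sq_eq_sq₀ (norm_nonneg _) (norm_nonneg _), Complex.sq_norm, Complex.sq_norm, normSq_apply, normSq_apply]
  simp only [sub_re, sub_im, one_re, one_im]
  constructor <;> intro h <;> linarith

theorem div_sub_one_ne_one {α : ℂ} (hα : α ≠ 1) (z : ℂ) : (z - α) / (z - 1) ≠ 1 := by
  rcases eq_or_ne z 1 with rfl | hz
  · simp
  · rw [Ne, div_eq_one_iff_eq (sub_ne_zero.2 hz), sub_right_inj]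
    exact hα

theorem eq_div_sub_one_comm {α z w : ℂ} (hz : z ≠ 1) (hw : w ≠ 1) :
    w = (z - α) / (z - 1) ↔ z = (w - α) / (w - 1) := by
  rw [eq_div_iff (sub_ne_zero.2 hz), eq_div_iff (sub_ne_zero.2 hw)]
  constructor <;> intro h <;> linear_combination h

theorem norm_div_sub_one_eq_one_iff {α w : ℂ} (hw : w ≠ 1) :
    ‖(w - α) / (w - 1)‖ = 1 ↔ ‖w - α‖ = ‖w - 1‖ := by
  rw [norm_div, div_eq_one_iff_eq (norm_ne_zero_iff.2 (sub_ne_zero.2 hw))]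

end Complex

open Complex in
/-- The image of the punctured unit circle under `z ↦ (z − α)/(z − 1)`, `α ≠ 1`,
is the line `2by = (a² + b² − 1) + (2 − 2a)x` where `a = Re α`, `b = Im α`. -/
theorem stmt3 (α : ℂ) (hα : α ≠ 1) :
    {w : ℂ | ∃ z : ℂ, ‖z‖ = 1 ∧ z ≠ 1 ∧ w = (z - α) / (z - 1)} =
      {w : ℂ | 2 * α.im * w.im = (α.re ^ 2 + α.im ^ 2 - 1) + (2 - 2 * α.re) * w.re} := by
  ext w
  rw [Set.mem_ofPred_eq, Set.mem_ofPred_eq, ← norm_sub_eq_norm_sub_one_iff]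
  constructor
  · rintro ⟨z, hz, hz1, rfl⟩
    have hw := div_sub_one_ne_one hα z
    rwa [← norm_div_sub_one_eq_one_iff hw, ← (eq_div_sub_one_comm hz1 hw).1 rfl]
  · intro h
    have hw : w ≠ 1 := by
      rintro rfl
      exact hα (sub_eq_zero.1 (by simpa using h)).symm
    have hz1 := div_sub_one_ne_one hα w
    exact ⟨_, (norm_div_sub_one_eq_one_iff hw).2 h, hz1, (eq_div_sub_one_comm hz1 hw).2 rfl⟩
end

section
/- Let α ∈ ℂ with α ≠ 1, and write a = Re α, b = Im α. Then {(z − α)/(z − 1) : z ∈ ℂ, |z| < 1} = {x + iy : x, y ∈ ℝ, 2by > (a² + b² − 1) + (2 − 2a)x}, and {(z − α)/(z − 1) : z ∈ ℂ, |z| > 1} = {x + iy : x, y ∈ ℝ, 2by < (a² + b² − 1) + (2 − 2a)x} \ {1}. -/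
/-!
On `ℂ \ {1}` the map `z ↦ (z - α)/(z - 1)` is an involution that never takes the value `1`,
and `w - α = z (1 - α)/(z - 1)`, `w - 1 = (1 - α)/(z - 1)` for `w = (z - α)/(z - 1)`.
Hence `|z| = |w - α| / |w - 1|`, so the disc and the exterior of the closed disc correspond to
`|w - α| < |w - 1|` and `|w - 1| < |w - α|` (with `w ≠ 1`), the two sides of the perpendicular
bisector of `α` and `1`; expanding `|w - α|² - |w - 1|²` gives the equation of that line.
-/

open Complex

variable {α : ℂ}

lemma sub_div_sub_one_sub_one (α : ℂ) {z : ℂ} (hz : z ≠ 1) :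
    (z - α) / (z - 1) - 1 = (1 - α) / (z - 1) := by
  field_simp [sub_ne_zero.mpr hz]
  ring

lemma sub_div_sub_one_ne_one (hα : α ≠ 1) {z : ℂ} (hz : z ≠ 1) : (z - α) / (z - 1) ≠ 1 := by
  rw [← sub_ne_zero, sub_div_sub_one_sub_one α hz]
  exact div_ne_zero (sub_ne_zero.mpr hα.symm) (sub_ne_zero.mpr hz)

lemma sub_div_sub_one_involutive (hα : α ≠ 1) {z : ℂ} (hz : z ≠ 1) :
    ((z - α) / (z - 1) - α) / ((z - α) / (z - 1) - 1) = z := by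
  have hz' : z - 1 ≠ 0 := sub_ne_zero.mpr hz
  have hα' : 1 - α ≠ 0 := sub_ne_zero.mpr hα.symm
  rw [sub_div_sub_one_sub_one α hz]
  field_simp
  ring

lemma exists_mem_eq_sub_div_sub_one_iff (hα : α ≠ 1) {S : Set ℂ} (hS : (1 : ℂ) ∉ S) (w : ℂ) :
    (∃ z ∈ S, w = (z - α) / (z - 1)) ↔ w ≠ 1 ∧ (w - α) / (w - 1) ∈ S := by
  constructor
  · rintro ⟨z, hzS, rfl⟩
    have hz : z ≠ 1 := ne_of_mem_of_not_mem hzS hS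
    exact ⟨sub_div_sub_one_ne_one hα hz, by rwa [sub_div_sub_one_involutive hα hz]⟩
  · rintro ⟨hw, hwS⟩
    exact ⟨_, hwS, (sub_div_sub_one_involutive hα hw).symm⟩

lemma exists_norm_lt_one_eq_sub_div_sub_one_iff (hα : α ≠ 1) (w : ℂ) :
    (∃ z : ℂ, ‖z‖ < 1 ∧ w = (z - α) / (z - 1)) ↔ ‖w - α‖ < ‖w - 1‖ := by
  refine (exists_mem_eq_sub_div_sub_one_iff hα (S := {z | ‖z‖ < 1}) (by simp) w).trans ?_
  rw [Set.mem_ofPred_eq, norm_div]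
  refine ⟨fun ⟨hw, hlt⟩ => ?_, fun h => ?_⟩
  · rwa [div_lt_one (norm_pos_iff.mpr (sub_ne_zero.mpr hw))] at hlt
  · have hpos : 0 < ‖w - 1‖ := (norm_nonneg _).trans_lt h
    exact ⟨sub_ne_zero.mp (norm_pos_iff.mp hpos), (div_lt_one hpos).mpr h⟩

lemma exists_one_lt_norm_eq_sub_div_sub_one_iff (hα : α ≠ 1) (w : ℂ) :
    (∃ z : ℂ, 1 < ‖z‖ ∧ w = (z - α) / (z - 1)) ↔ ‖w - 1‖ < ‖w - α‖ ∧ w ≠ 1 := by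
  refine (exists_mem_eq_sub_div_sub_one_iff hα (S := {z | 1 < ‖z‖}) (by simp) w).trans ?_
  rw [and_comm, Set.mem_ofPred_eq, norm_div]
  refine and_congr_left fun hw => ?_
  exact one_lt_div (norm_pos_iff.mpr (sub_ne_zero.mpr hw))

lemma normSq_sub_sub_normSq_sub_one (α w : ℂ) :
    normSq (w - α) - normSq (w - 1) =
      (α.re ^ 2 + α.im ^ 2 - 1) + (2 - 2 * α.re) * w.re - 2 * α.im * w.im := by
  simp only [normSq_apply, sub_re, sub_im, one_re, one_im]
  ring

lemma norm_lt_norm_iff_normSq_lt {u v : ℂ} : ‖u‖ < ‖v‖ ↔ normSq u < normSq v := by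
  rw [← sq_lt_sq₀ (norm_nonneg u) (norm_nonneg v), Complex.sq_norm, Complex.sq_norm]

/-- For `α ≠ 1`, the Möbius map `z ↦ (z − α)/(z − 1)` sends the open unit disc onto the
open half plane `2by > (a² + b² − 1) + (2 − 2a)x` and the exterior of the closed unit
disc onto the other open half plane with the point `1` removed (`a = Re α`, `b = Im α`). -/
theorem stmt4 (α : ℂ) (hα : α ≠ 1) :
    ({w : ℂ | ∃ z : ℂ, ‖z‖ < 1 ∧ w = (z - α) / (z - 1)} =
      {w : ℂ | 2 * α.im * w.im > (α.re ^ 2 + α.im ^ 2 - 1) + (2 - 2 * α.re) * w.re}) ∧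
    ({w : ℂ | ∃ z : ℂ, 1 < ‖z‖ ∧ w = (z - α) / (z - 1)} =
      {w : ℂ | 2 * α.im * w.im < (α.re ^ 2 + α.im ^ 2 - 1) + (2 - 2 * α.re) * w.re} \ {1}) := by
  constructor <;> ext w <;> have h := normSq_sub_sub_normSq_sub_one α w
  · rw [Set.mem_ofPred_eq, Set.mem_ofPred_eq, exists_norm_lt_one_eq_sub_div_sub_one_iff hα,
      norm_lt_norm_iff_normSq_lt]
    constructor <;> intro <;> linarith
  · rw [Set.mem_ofPred_eq, Set.mem_sdiff, Set.mem_ofPred_eq, Set.mem_singleton_iff,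
      exists_one_lt_norm_eq_sub_div_sub_one_iff hα, norm_lt_norm_iff_normSq_lt]
    refine and_congr_left fun _ => ?_
    constructor <;> intro <;> linarith
end

section
/- Let k ≥ 2 be an integer and let λ ∈ ℂ with λ ≠ 0. Then there exists z ∈ ℂ with λ(z − 1)^k = 1 and |z| > 1. -/
/-!
The `k` solutions are `1 + w` with `w` running over the `k`-th roots of `λ⁻¹`. These roots sum
to zero when `k ≥ 2`, so one of them has nonnegative real part, and then
`‖1 + w‖² = 1 + 2 re w + ‖w‖² > 1`.
-/

theorem IsPrimitiveRoot.exists_re_nonneg_mul_pow {ζ : ℂ} {k : ℕ} (hζ : IsPrimitiveRoot ζ k)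
    (hk : 1 < k) (w : ℂ) : ∃ j < k, 0 ≤ (w * ζ ^ j).re := by
  by_contra! h
  have hneg : ∑ j ∈ Finset.range k, (w * ζ ^ j).re < 0 :=
    Finset.sum_neg (fun j hj => h j (Finset.mem_range.1 hj)) ⟨0, Finset.mem_range.2 (by omega)⟩
  have hzero : ∑ j ∈ Finset.range k, (w * ζ ^ j).re = 0 := by
    rw [← Complex.re_sum, ← Finset.mul_sum, hζ.geom_sum_eq_zero hk, mul_zero, Complex.zero_re]
  linarith

theorem Complex.exists_pow_eq_of_re_nonneg {k : ℕ} (hk : 2 ≤ k) (a : ℂ) :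
    ∃ w : ℂ, w ^ k = a ∧ 0 ≤ w.re := by
  have hk0 : k ≠ 0 := by omega
  obtain ⟨w, hw⟩ := IsAlgClosed.exists_pow_nat_eq a (Nat.pos_of_ne_zero hk0)
  have hζ := Complex.isPrimitiveRoot_exp k hk0
  obtain ⟨j, -, hre⟩ := hζ.exists_re_nonneg_mul_pow (by omega) w
  refine ⟨w * _ ^ j, ?_, hre⟩
  rw [mul_pow, ← pow_mul, mul_comm j, pow_mul, hζ.pow_eq_one, one_pow, mul_one, hw]

theorem Complex.one_lt_norm_one_add {w : ℂ} (hw : w ≠ 0) (hre : 0 ≤ w.re) : 1 < ‖1 + w‖ := by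
  have hsq : ‖1 + w‖ ^ 2 = 1 + ‖w‖ ^ 2 + 2 * w.re := by
    rw [Complex.sq_norm, Complex.sq_norm, Complex.normSq_add, map_one]
    simp
  have hpos : 0 < ‖w‖ := norm_pos_iff.2 hw
  nlinarith [norm_nonneg (1 + w)]

/-- For `k ≥ 2` and `λ ≠ 0` there is a solution `z` of `λ(z − 1)^k = 1` with `|z| > 1`. -/
theorem stmt8 (k : ℕ) (hk : 2 ≤ k) (l : ℂ) (hl : l ≠ 0) :
    ∃ z : ℂ, l * (z - 1) ^ k = 1 ∧ 1 < ‖z‖ := by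
  obtain ⟨w, hwk, hre⟩ := Complex.exists_pow_eq_of_re_nonneg hk l⁻¹
  have hw : w ≠ 0 := by
    rintro rfl
    rw [zero_pow (by omega)] at hwk
    exact hl (inv_eq_zero.1 hwk.symm)
  refine ⟨1 + w, ?_, Complex.one_lt_norm_one_add hw hre⟩
  rw [add_sub_cancel_left, hwk, mul_inv_cancel₀ hl]
end

section
/- For every z ∈ ℂ with |z| = 1 and z² ≠ −1 one has z/(z² + 1) = 1/(2·Re z); consequently {z/(z² + 1) : z ∈ ℂ, |z| = 1, z² ≠ −1} = {x ∈ ℝ : |x| ≥ 1/2}, regarded as a subset of ℂ via the embedding of ℝ in ℂ. -/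
/-! On the unit circle `z̄ = z⁻¹`, so `z² + 1 = z (z + z̄) = 2 Re z · z` and hence
`z / (z² + 1) = 1 / (2 Re z)`; the excluded points `z = ±i` are exactly those with `Re z = 0`.
As `z` runs over the circle, `Re z` takes every value in `[-1, 1]`, so `1 / (2 Re z)` takes
exactly the real values of modulus at least `1/2`. -/

namespace Complex

open ComplexConjugate

theorem sq_add_one_eq_two_re_mul {z : ℂ} (hz : ‖z‖ = 1) : z ^ 2 + 1 = 2 * z.re * z := by
  have hconj : z * conj z = 1 := by
    rw [mul_conj, normSq_eq_norm_sq, hz]; norm_num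
  calc z ^ 2 + 1 = z * (z + conj z) := by rw [mul_add, hconj]; ring
    _ = 2 * z.re * z := by rw [add_conj]; push_cast; ring

theorem sq_eq_neg_one_iff_re_eq_zero {z : ℂ} (hz : ‖z‖ = 1) : z ^ 2 = -1 ↔ z.re = 0 := by
  have hz0 : z ≠ 0 := norm_ne_zero_iff.mp (by rw [hz]; exact one_ne_zero)
  rw [← add_eq_zero_iff_eq_neg, sq_add_one_eq_two_re_mul hz]
  simp [hz0]

theorem div_sq_add_one_eq_one_div_two_re {z : ℂ} (hz : ‖z‖ = 1) (h2 : z ^ 2 ≠ -1) :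
    z / (z ^ 2 + 1) = 1 / (2 * (z.re : ℂ)) := by
  have hz0 : z ≠ 0 := norm_ne_zero_iff.mp (by rw [hz]; exact one_ne_zero)
  have hre : (z.re : ℂ) ≠ 0 := ofReal_ne_zero.mpr ((sq_eq_neg_one_iff_re_eq_zero hz).not.mp h2)
  rw [sq_add_one_eq_two_re_mul hz]
  field_simp

theorem exists_norm_eq_one_re_eq {r : ℝ} (hr : |r| ≤ 1) : ∃ z : ℂ, ‖z‖ = 1 ∧ z.re = r := by
  obtain ⟨hr₁, hr₂⟩ := abs_le.mp hr
  exact ⟨exp (Real.arccos r * I), norm_exp_ofReal_mul_I _,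
    by rw [exp_ofReal_mul_I_re, Real.cos_arccos hr₁ hr₂]⟩

end Complex

theorem one_half_le_abs_one_div_two_mul_iff {r : ℝ} (hr : r ≠ 0) :
    1 / 2 ≤ |1 / (2 * r)| ↔ |r| ≤ 1 := by
  rw [abs_div, abs_mul, abs_one, abs_two, div_le_div_iff₀ two_pos (by positivity)]
  constructor <;> intro h <;> linarith

/-- For `z` on the unit circle with `z² ≠ −1` one has `z/(z² + 1) = 1/(2 Re z)`, and
the image of the unit circle (minus `±i`) under `z ↦ z/(z² + 1)` is
`{x ∈ ℝ : |x| ≥ 1/2}`, viewed inside `ℂ`. -/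
theorem stmt9 :
    (∀ z : ℂ, ‖z‖ = 1 → z ^ 2 ≠ -1 →
      z / (z ^ 2 + 1) = 1 / (2 * (z.re : ℂ))) ∧
    {w : ℂ | ∃ z : ℂ, ‖z‖ = 1 ∧ z ^ 2 ≠ -1 ∧ w = z / (z ^ 2 + 1)} =
      {w : ℂ | ∃ x : ℝ, 1 / 2 ≤ |x| ∧ w = (x : ℂ)} := by
  refine ⟨fun z hz h2 => Complex.div_sq_add_one_eq_one_div_two_re hz h2,
    Set.ext fun w => ⟨?_, ?_⟩⟩
  · rintro ⟨z, hz, h2, rfl⟩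
    have hre : z.re ≠ 0 := (Complex.sq_eq_neg_one_iff_re_eq_zero hz).not.mp h2
    refine ⟨1 / (2 * z.re), (one_half_le_abs_one_div_two_mul_iff hre).mpr ?_, ?_⟩
    · exact hz ▸ Complex.abs_re_le_norm z
    · rw [Complex.div_sq_add_one_eq_one_div_two_re hz h2]; push_cast; rfl
  · rintro ⟨x, hx, rfl⟩
    have hx0 : x ≠ 0 := by rintro rfl; norm_num at hx
    have hr0 : 1 / (2 * x) ≠ 0 := by simp [hx0]
    have hr : |1 / (2 * x)| ≤ 1 := by
      rw [← one_half_le_abs_one_div_two_mul_iff hr0]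
      convert hx using 2
      field_simp
    obtain ⟨z, hz, hre⟩ := Complex.exists_norm_eq_one_re_eq hr
    have h2 : z ^ 2 ≠ -1 := (Complex.sq_eq_neg_one_iff_re_eq_zero hz).not.mpr (hre ▸ hr0)
    refine ⟨z, hz, h2, ?_⟩
    rw [Complex.div_sq_add_one_eq_one_div_two_re hz h2, hre]
    push_cast
    field_simp
end

section
/- Let s = Σ_{j=0}^{k} a_j X^j be a polynomial with real coefficients a_0, …, a_k satisfying 2|a_1| > Σ_{j=0}^{k} |a_j|. Then the set E = { s(z)/(z² − 1) : z ∈ ℂ, |z| = 1, z ≠ 1, z ≠ −1 } is nonempty, disjoint from the real axis, and is not a connected subset of ℂ. -/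
open Polynomial Finset ComplexConjugate

/-!
On the unit circle `z² - 1 = z (z - z̄) = 2i z Im z`, so `Im (s(z) / (z² - 1)) = -Re (z̄ s(z)) / (2 Im z)`.
Since `z̄ s(z) = a₁ + Σ_{j ≠ 1} aⱼ z^{j-1}` and `|a₁|` exceeds `Σ_{j ≠ 1} |aⱼ|`, the real part
`Re (z̄ s(z))` has the sign of `a₁`. Hence `E` misses the real axis, and the sign of `Im w` flips with
that of `Im z`: the points `z = ±i` put `E` in both open half-planes, which `Im` separates.
-/

theorem mul_sum_mul_pos_of_dominant {ι : Type*} [DecidableEq ι] {S : Finset ι} {i : ι}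
    (hi : i ∈ S) (a b : ι → ℝ) (hb : ∀ j ∈ S, |b j| ≤ 1) (hbi : b i = 1)
    (h : ∑ j ∈ S, |a j| < 2 * |a i|) :
    0 < a i * ∑ j ∈ S, a j * b j := by
  rw [← add_sum_erase _ _ hi] at h ⊢
  set r := ∑ j ∈ S.erase i, a j * b j
  have hr : |r| < |a i| := calc
    |r| ≤ ∑ j ∈ S.erase i, |a j * b j| := abs_sum_le_sum_abs _ _
    _ ≤ ∑ j ∈ S.erase i, |a j| := sum_le_sum fun j hj => by
        rw [abs_mul]; exact mul_le_of_le_one_right (abs_nonneg _) (hb j (mem_of_mem_erase hj))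
    _ < |a i| := by linarith
  have hprod : -(a i * r) ≤ |a i| * |r| := abs_mul (a i) r ▸ neg_le_abs _
  rw [hbi, mul_one, mul_add, ← abs_mul_abs_self (a i)]
  nlinarith [abs_nonneg r, mul_lt_mul_of_pos_left hr ((abs_nonneg r).trans_lt hr)]

theorem not_isPreconnected_of_mul_neg {X : Type*} [TopologicalSpace X] {S : Set X} {f : X → ℝ}
    (hf : Continuous f) (hS : ∀ x ∈ S, f x ≠ 0) {x y : X} (hx : x ∈ S) (hy : y ∈ S)
    (hxy : f x * f y < 0) : ¬ IsPreconnected S := by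
  intro hconn
  have h0 : (0 : ℝ) ∈ Set.uIcc (f x) (f y) := by
    rcases mul_neg_iff.1 hxy with ⟨hfx, hfy⟩ | ⟨hfx, hfy⟩
    · exact Set.mem_uIcc.2 (Or.inr ⟨hfy.le, hfx.le⟩)
    · exact Set.mem_uIcc.2 (Or.inl ⟨hfx.le, hfy.le⟩)
  obtain ⟨w, hw, hw0⟩ := (isPreconnected_iff_ordConnected.1 (hconn.image f hf.continuousOn)).uIcc_subset
    (Set.mem_image_of_mem f hx) (Set.mem_image_of_mem f hy) h0
  exact hS w hw hw0

namespace Complex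

theorem mul_conj_of_norm_eq_one {z : ℂ} (hz : ‖z‖ = 1) : z * conj z = 1 := by
  rw [← RCLike.inv_eq_conj hz, mul_inv_cancel₀ (norm_ne_zero_iff.1 (hz ▸ one_ne_zero))]

theorem im_ne_zero_of_norm_eq_one {z : ℂ} (hz : ‖z‖ = 1) (h1 : z ≠ 1) (hm1 : z ≠ -1) :
    z.im ≠ 0 := by
  intro him
  have hre : z = z.re := ext rfl (by simp [him])
  rw [hre, norm_real, Real.norm_eq_abs] at hz
  rcases abs_eq (zero_le_one' ℝ) |>.1 hz with h | h
  · exact h1 (by rw [hre, h]; simp)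
  · exact hm1 (by rw [hre, h]; simp)

theorem im_mul_im_div_sq_sub_one {z : ℂ} (hz : ‖z‖ = 1) (him : z.im ≠ 0) (w : ℂ) :
    z.im * (w / (z ^ 2 - 1)).im = -(conj z * w).re / 2 := by
  have hzc := mul_conj_of_norm_eq_one hz
  have hden : z ^ 2 - 1 = z * ((2 * z.im : ℝ) * I) := by
    rw [← sub_conj, mul_sub, ← hzc]; ring
  have hquot : w / (z ^ 2 - 1) = -I * (conj z * w) / (2 * z.im : ℝ) := by
    have hz0 : z ≠ 0 := by rintro rfl; simp at hz
    have h2im : ((2 * z.im : ℝ) : ℂ) ≠ 0 := by exact_mod_cast mul_ne_zero two_ne_zero him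
    rw [hden, div_eq_div_iff (mul_ne_zero hz0 (mul_ne_zero h2im I_ne_zero)) h2im]
    linear_combination (-(w * ((2 * z.im : ℝ) : ℂ))) * hzc
      + w * ((2 * z.im : ℝ) : ℂ) * z * conj z * I_sq
  rw [hquot, div_ofReal_im, neg_mul, neg_im, I_mul_im]
  field_simp

theorem mul_re_conj_mul_sum_pos {z : ℂ} (hz : ‖z‖ = 1) {S : Finset ℕ} (h1 : 1 ∈ S)
    (a : ℕ → ℝ) (h : ∑ j ∈ S, |a j| < 2 * |a 1|) :
    0 < a 1 * (conj z * ∑ j ∈ S, (a j : ℂ) * z ^ j).re := by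
  have hre : (conj z * ∑ j ∈ S, (a j : ℂ) * z ^ j).re = ∑ j ∈ S, a j * (conj z * z ^ j).re := by
    simp only [mul_sum, re_sum, mul_left_comm (conj z), re_ofReal_mul]
  rw [hre]
  refine mul_sum_mul_pos_of_dominant h1 a _ (fun j _ => ?_) ?_ h
  · calc |(conj z * z ^ j).re| ≤ ‖conj z * z ^ j‖ := abs_re_le_norm _
      _ = 1 := by rw [norm_mul, norm_pow, norm_conj, hz, one_pow, one_mul]
  · rw [pow_one, mul_comm, mul_conj_of_norm_eq_one hz, one_re]

end Complex

/-- If `s = Σ_{j=0}^k a_j X^j` has real coefficients with `2|a_1| > Σ_{j=0}^k |a_j|`,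
then the set `E = {s(z)/(z² − 1) : |z| = 1, z ≠ ±1}` is nonempty, disjoint from the
real axis, and not connected. -/
theorem stmt12 (k : ℕ) (hk : 1 ≤ k) (a : ℕ → ℝ)
    (s : Polynomial ℂ)
    (hs : s = ∑ j ∈ Finset.range (k + 1), Polynomial.C ((a j : ℂ)) * Polynomial.X ^ j)
    (h : 2 * |a 1| > ∑ j ∈ Finset.range (k + 1), |a j|)
    (E : Set ℂ)
    (hE : E = {w : ℂ | ∃ z : ℂ, ‖z‖ = 1 ∧ z ≠ 1 ∧ z ≠ -1 ∧
      w = s.eval z / (z ^ 2 - 1)}) :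
    E.Nonempty ∧ (∀ w ∈ E, w.im ≠ 0) ∧ ¬ IsConnected E := by
  have heval (z : ℂ) : s.eval z = ∑ j ∈ range (k + 1), (a j : ℂ) * z ^ j := by
    simp [hs, eval_finsetSum]
  have hsign {z : ℂ} (hz : ‖z‖ = 1 ∧ z ≠ 1 ∧ z ≠ -1) :
      z.im * (a 1 * (s.eval z / (z ^ 2 - 1)).im) < 0 := by
    have hpos := Complex.mul_re_conj_mul_sum_pos hz.1 (mem_range.2 (by omega)) a h
    rw [mul_left_comm, Complex.im_mul_im_div_sq_sub_one hz.1
      (Complex.im_ne_zero_of_norm_eq_one hz.1 hz.2.1 hz.2.2), heval]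
    linarith
  have hmem {z : ℂ} (hz : ‖z‖ = 1 ∧ z ≠ 1 ∧ z ≠ -1) : s.eval z / (z ^ 2 - 1) ∈ E :=
    hE ▸ ⟨z, hz.1, hz.2.1, hz.2.2, rfl⟩
  have hI : ‖Complex.I‖ = 1 ∧ Complex.I ≠ 1 ∧ Complex.I ≠ -1 := by
    refine ⟨Complex.norm_I, ?_, ?_⟩ <;> intro h' <;> simpa using congrArg Complex.im h'
  have hnegI : ‖-Complex.I‖ = 1 ∧ -Complex.I ≠ 1 ∧ -Complex.I ≠ -1 := by
    refine ⟨by simp, ?_, ?_⟩ <;> intro h' <;> simpa using congrArg Complex.im h'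
  have hnonreal : ∀ w ∈ E, w.im ≠ 0 := by
    rw [hE]
    rintro _ ⟨z, hz, h1, hm1, rfl⟩ h0
    simpa [h0] using hsign ⟨hz, h1, hm1⟩
  refine ⟨⟨_, hmem hI⟩, hnonreal, fun hconn => ?_⟩
  refine not_isPreconnected_of_mul_neg Complex.continuous_im hnonreal (hmem hI) (hmem hnegI) ?_
    hconn.isPreconnected
  have hsignI := hsign hI
  have hsignNegI := hsign hnegI
  simp only [Complex.I_im, Complex.neg_im, one_mul, neg_mul, neg_neg_iff_pos] at hsignI hsignNegI
  by_contra! hnonneg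
  nlinarith [mul_nonneg (mul_self_nonneg (a 1)) hnonneg]
end

section
/- Let α ∈ ℂ with α ≠ −1 and |α|² + Re α = 0. Then |α| < 1 and {(z + α)/(z − 1)² : z ∈ ℂ, |z| = 1, z ≠ 1} = { −(α + 1)·r − (α + 1)(1 + 2·conj(α)) / (4(1 − |α|²)) : r ∈ ℝ, r ≥ 0 }. -/
/-! The Möbius map `z ↦ (z - 1)⁻¹` sends `𝕋 \ {1}` onto the line `re u = -1/2`, and in this
coordinate `(z + α)/(z - 1)² = β u² + u` with `β = α + 1`. The hypothesis says exactly that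
`re β⁻¹ = 1`, so completing the square, `β u² + u = β (u + (2β)⁻¹)² - (4β)⁻¹` where
`u + (2β)⁻¹` runs over the imaginary axis and its square over `(-∞, 0]`. Finally
`1 - |α|² = |β|² = re β` turns the constant of the statement into `-(4β)⁻¹`. -/

open Complex ComplexConjugate

namespace Complex

lemma re_inv_sub_one_eq_neg_half_iff {z : ℂ} (hz : z ≠ 1) :
    ((z - 1)⁻¹).re = -1 / 2 ↔ ‖z‖ = 1 := by
  have hpos : 0 < normSq (z - 1) := normSq_pos.mpr (sub_ne_zero.mpr hz)
  rw [inv_re, div_eq_iff hpos.ne', ← pow_eq_one_iff_of_nonneg (norm_nonneg z) two_ne_zero,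
    Complex.sq_norm]
  simp only [normSq_apply, sub_re, sub_im, one_re, one_im]
  constructor <;> intro h <;> linarith

lemma image_inv_sub_one_unitCircle :
    (fun z : ℂ ↦ (z - 1)⁻¹) '' {z | ‖z‖ = 1 ∧ z ≠ 1} = {u | u.re = -1 / 2} := by
  ext u
  constructor
  · rintro ⟨z, ⟨hz, hz1⟩, rfl⟩
    exact (re_inv_sub_one_eq_neg_half_iff hz1).mpr hz
  · intro hu
    have hu0 : u ≠ 0 := by rintro rfl; norm_num at hu
    have hz1 : 1 + u⁻¹ ≠ 1 := by simpa using hu0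
    refine ⟨1 + u⁻¹, ⟨?_, hz1⟩, by simp⟩
    rw [← re_inv_sub_one_eq_neg_half_iff hz1]
    simpa using hu

lemma add_div_sub_one_sq {z : ℂ} (hz : z ≠ 1) (α : ℂ) :
    (z + α) / (z - 1) ^ 2 = (α + 1) * ((z - 1)⁻¹) ^ 2 + (z - 1)⁻¹ := by
  have : z - 1 ≠ 0 := sub_ne_zero.mpr hz
  field_simp
  ring

lemma image_mul_sq_add_self_re_eq_neg_half {β : ℂ} (hβ : β ≠ 0) (hre : (β⁻¹).re = 1) :
    (fun u ↦ β * u ^ 2 + u) '' {u | u.re = -1 / 2} =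
      {w | ∃ r : ℝ, 0 ≤ r ∧ w = -β * r - (4 * β)⁻¹} := by
  set c := (2 * β)⁻¹ with hc_def
  have hc : c.re = 1 / 2 := by
    rw [hc_def, mul_inv, show (2 : ℂ)⁻¹ = ((2⁻¹ : ℝ) : ℂ) by push_cast; rfl, re_ofReal_mul, hre]
    norm_num
  have hsq (u : ℂ) : β * u ^ 2 + u = β * (u + c) ^ 2 - (4 * β)⁻¹ := by
    rw [hc_def]
    field_simp
    ring
  ext w
  constructor
  · rintro ⟨u, hu, rfl⟩
    obtain ⟨t, ht⟩ : ∃ t : ℝ, u + c = t * I :=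
      ⟨(u + c).im, by apply ext <;> simp [show u.re = -1 / 2 from hu, hc]; norm_num⟩
    refine ⟨t ^ 2, sq_nonneg t, ?_⟩
    dsimp only
    rw [hsq, ht]
    push_cast
    linear_combination (β * (t : ℂ) ^ 2) * I_sq
  · rintro ⟨r, hr, rfl⟩
    refine ⟨Real.sqrt r * I - c, by simp [hc]; norm_num, ?_⟩
    dsimp only
    rw [hsq, sub_add_cancel, mul_pow, ← ofReal_pow, Real.sq_sqrt hr, I_sq]
    ring

lemma re_inv_eq_one_of_re_eq_norm_sq {β : ℂ} (hβ : β ≠ 0) (h : β.re = ‖β‖ ^ 2) :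
    (β⁻¹).re = 1 := by
  rw [inv_re, normSq_eq_norm_sq, h]
  exact div_self (pow_ne_zero 2 (norm_ne_zero_iff.mpr hβ))

section

variable {α : ℂ} (h : ‖α‖ ^ 2 + α.re = 0)
include h

lemma norm_add_one_sq_of_norm_sq_add_re_eq_zero : ‖α + 1‖ ^ 2 = 1 - ‖α‖ ^ 2 := by
  rw [Complex.sq_norm] at h
  rw [Complex.sq_norm, Complex.sq_norm, normSq_add]
  simp only [map_one, mul_one]
  linarith

lemma norm_lt_one_of_norm_sq_add_re_eq_zero (hα : α ≠ -1) : ‖α‖ < 1 := by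
  have hpos : 0 < ‖α + 1‖ ^ 2 := by
    have : α + 1 ≠ 0 := by rwa [Ne, add_eq_zero_iff_eq_neg]
    positivity
  rw [norm_add_one_sq_of_norm_sq_add_re_eq_zero h] at hpos
  nlinarith [norm_nonneg α]

lemma mul_one_add_two_conj_div_of_norm_sq_add_re_eq_zero (hα : α ≠ -1) :
    (α + 1) * (1 + 2 * conj α) / (4 * (1 - (‖α‖ : ℂ) ^ 2)) = (4 * (α + 1))⁻¹ := by
  have hβ : α + 1 ≠ 0 := by rwa [Ne, add_eq_zero_iff_eq_neg]
  have hnorm := norm_add_one_sq_of_norm_sq_add_re_eq_zero h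
  have hn : (1 - (‖α‖ : ℂ) ^ 2) ≠ 0 := by
    exact_mod_cast (hnorm ▸ pow_ne_zero 2 (norm_ne_zero_iff.mpr hβ) : (1 - ‖α‖ ^ 2 : ℝ) ≠ 0)
  have hmul : (α + 1) * conj (α + 1) = 1 - (‖α‖ : ℂ) ^ 2 := by
    rw [mul_conj, normSq_eq_norm_sq, hnorm]; push_cast; ring
  have hadd : (α + 1) + conj (α + 1) = 2 * (1 - (‖α‖ : ℂ) ^ 2) := by
    rw [add_conj, add_re, one_re, show α.re = -‖α‖ ^ 2 by linarith]; push_cast; ring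
  rw [map_add, map_one] at hmul hadd
  field_simp
  linear_combination (2 * (α + 1) + 1) * hmul - (α + 1) * hadd

end

end Complex

/-- For `α ≠ −1` with `|α|² + Re α = 0`, one has `|α| < 1` and the curve
`{(z + α)/(z − 1)² : |z| = 1, z ≠ 1}` is the half line
`{−(α + 1)r − (α + 1)(1 + 2 conj α)/(4(1 − |α|²)) : r ≥ 0}`. -/
theorem stmt15 (α : ℂ) (hα : α ≠ -1) (h : ‖α‖ ^ 2 + α.re = 0) :
    ‖α‖ < 1 ∧
    {w : ℂ | ∃ z : ℂ, ‖z‖ = 1 ∧ z ≠ 1 ∧ w = (z + α) / (z - 1) ^ 2} =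
      {w : ℂ | ∃ r : ℝ, 0 ≤ r ∧
        w = -(α + 1) * (r : ℂ)
            - (α + 1) * (1 + 2 * (starRingEnd ℂ) α)
              / (4 * (1 - (‖α‖ : ℂ) ^ 2))} := by
  have hβ : α + 1 ≠ 0 := by rwa [Ne, add_eq_zero_iff_eq_neg]
  have hre : ((α + 1)⁻¹).re = 1 := by
    refine re_inv_eq_one_of_re_eq_norm_sq hβ ?_
    rw [norm_add_one_sq_of_norm_sq_add_re_eq_zero h, add_re, one_re]
    linarith
  have hcurve : {w : ℂ | ∃ z : ℂ, ‖z‖ = 1 ∧ z ≠ 1 ∧ w = (z + α) / (z - 1) ^ 2} =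
      (fun u ↦ (α + 1) * u ^ 2 + u) '' ((fun z : ℂ ↦ (z - 1)⁻¹) '' {z | ‖z‖ = 1 ∧ z ≠ 1}) := by
    rw [← Set.image_comp]
    ext w
    constructor
    · rintro ⟨z, hz, hz1, rfl⟩
      exact ⟨z, ⟨hz, hz1⟩, (add_div_sub_one_sq hz1 α).symm⟩
    · rintro ⟨z, ⟨hz, hz1⟩, rfl⟩
      exact ⟨z, hz, hz1, (add_div_sub_one_sq hz1 α).symm⟩
  refine ⟨norm_lt_one_of_norm_sq_add_re_eq_zero h hα, ?_⟩
  simp_rw [mul_one_add_two_conj_div_of_norm_sq_add_re_eq_zero h hα]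
  rw [hcurve, image_inv_sub_one_unitCircle, image_mul_sq_add_self_re_eq_neg_half hβ hre]
end

section
/- Let α ∈ ℂ with α ≠ 0. Then there exist t, s ∈ ℝ with (it − 1/2)²(α + 1) + (it − 1/2) = α/2 + s·i·α if and only if |α|² + Re α = 0. Moreover, if |α|² + Re α = 0, then for every t ∈ ℝ there exists s ∈ ℝ satisfying this equation. -/
/-!
With `w = it − 1/2` one has `w² + w = −(t² + 1/4)` and `w² − 1/2 = −(t² + 1/4) − it`, so the
equation reads `(t² + 1/4)(α + 1) = −(s + t) i α`. Since `t² + 1/4 > 0` and `α ≠ 0`, some real `s`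
solves it iff `(α + 1)/α` is purely imaginary, i.e. iff `Re((α + 1) ᾱ) = |α|² + Re α` vanishes,
a condition that does not involve `t`.
-/

open Complex ComplexConjugate

theorem exists_ofReal_mul_I_mul_eq_iff {z α : ℂ} (hα : α ≠ 0) :
    (∃ r : ℝ, z = r * I * α) ↔ (z * conj α).re = 0 := by
  constructor
  · rintro ⟨r, rfl⟩
    rw [mul_assoc, mul_assoc, mul_conj]
    simp
  · intro h
    have hre : (z / α).re = 0 := by
      rw [div_eq_mul_inv, inv_def, ← mul_assoc, re_mul_ofReal, h, zero_mul]
    refine ⟨(z / α).im, ?_⟩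
    calc z = z / α * α := (div_mul_cancel₀ z hα).symm
      _ = (z / α).im * I * α := by congr 1; apply Complex.ext <;> simp [hre]

theorem re_mul_conj_add_one (α : ℂ) : ((α + 1) * conj α).re = ‖α‖ ^ 2 + α.re := by
  rw [add_mul, one_mul, mul_conj, ← Complex.sq_norm]; norm_cast

theorem parabola_eq_line_iff (α : ℂ) (t s : ℝ) :
    (I * t - 1 / 2) ^ 2 * (α + 1) + (I * t - 1 / 2) = α / 2 + s * I * α ↔
      ((t ^ 2 + 1 / 4 : ℝ) : ℂ) * (α + 1) = ((-(s + t) : ℝ) : ℂ) * I * α := by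
  push_cast
  constructor <;> intro h <;> linear_combination (-1 : ℂ) * h + (t ^ 2 * (α + 1)) * I_sq

theorem exists_parabola_eq_line_iff {α : ℂ} (hα : α ≠ 0) (t : ℝ) :
    (∃ s : ℝ, (I * t - 1 / 2) ^ 2 * (α + 1) + (I * t - 1 / 2) = α / 2 + s * I * α) ↔
      ‖α‖ ^ 2 + α.re = 0 := by
  have hc : (0 : ℝ) < t ^ 2 + 1 / 4 := by positivity
  simp_rw [parabola_eq_line_iff]
  calc (∃ s : ℝ, ((t ^ 2 + 1 / 4 : ℝ) : ℂ) * (α + 1) = ((-(s + t) : ℝ) : ℂ) * I * α)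
      ↔ ∃ r : ℝ, ((t ^ 2 + 1 / 4 : ℝ) : ℂ) * (α + 1) = r * I * α :=
        ⟨fun ⟨s, hs⟩ => ⟨_, hs⟩, fun ⟨r, hr⟩ => ⟨-r - t, by rwa [sub_add_cancel, neg_neg]⟩⟩
    _ ↔ (t ^ 2 + 1 / 4) * (‖α‖ ^ 2 + α.re) = 0 := by
        rw [exists_ofReal_mul_I_mul_eq_iff hα, mul_assoc, re_ofReal_mul, re_mul_conj_add_one]
    _ ↔ ‖α‖ ^ 2 + α.re = 0 := mul_eq_zero_iff_left hc.ne'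

/-- For `α ≠ 0`: the parabola `(it − 1/2)²(α + 1) + (it − 1/2)` meets the line
`α/2 + siα` iff `|α|² + Re α = 0`; and in that case every point of the parabola lies
on the line. -/
theorem stmt16 (α : ℂ) (hα : α ≠ 0) :
    ((∃ t s : ℝ, (Complex.I * t - 1 / 2) ^ 2 * (α + 1) + (Complex.I * t - 1 / 2) =
        α / 2 + s * Complex.I * α) ↔ ‖α‖ ^ 2 + α.re = 0) ∧
    (‖α‖ ^ 2 + α.re = 0 → ∀ t : ℝ, ∃ s : ℝ,
      (Complex.I * t - 1 / 2) ^ 2 * (α + 1) + (Complex.I * t - 1 / 2) =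
        α / 2 + s * Complex.I * α) :=
  ⟨⟨fun ⟨t, hts⟩ => (exists_parabola_eq_line_iff hα t).1 hts,
      fun h => ⟨0, (exists_parabola_eq_line_iff hα 0).2 h⟩⟩,
    fun h t => (exists_parabola_eq_line_iff hα t).2 h⟩
end
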